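/- Let s ≥ 1 and let (A₀,…,A_{s−1}) be an s-tuple of Σ⁰₂ subsets of ℕ. Suppose there is an s-tuple of functions (F₀,…,F_{s−1}) with (F₀,…,F_{s−1}) ≤_m (A₀,…,A_{s−1}) and such that for all x̄ = (x₀,…,x_{s−1}) and all i < s, φ_{F_i(x̄)} is not almost equal to φ_{x_i}. Then (A₀,…,A_{s−1}) is m-complete in the class of s-tuples of Σ⁰₂ subsets of ℕ. -/

import Mathlib

/-- The standard numbering of the partial computable functions. -/
def phi (e : ℕ) : ℕ →. ℕ := (Denumerable.ofNat Nat.Partrec.Code e).eval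

/-- `W_e`, the domain of `φ_e`. -/
def Wset (e : ℕ) : Set ℕ := {x : ℕ | (phi e x).Dom}

/-- A set `S ⊆ ℕ` is `Σ⁰₂` if `S = {n | ∃ a, ∀ b, R(n,a,b)}` for a computable relation `R`. -/
def Sigma02 (S : Set ℕ) : Prop :=
  ∃ R : ℕ × ℕ × ℕ → Bool, Computable R ∧ S = {n : ℕ | ∃ a : ℕ, ∀ b : ℕ, R (n, a, b) = true}

/-- m-reducibility of `s`-tuples of subsets of `ℕ`. -/
def TupleMRed {s : ℕ} (X A : Fin s → Set ℕ) : Prop :=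
  ∃ h : ℕ → ℕ, Computable h ∧ ∀ (i : Fin s) (n : ℕ), n ∈ X i ↔ h n ∈ A i

/-- m-reducibility of an `s`-tuple of functions `F_i : ℕ^s → ℕ` to an `s`-tuple of
subsets of `ℕ`: there are computable `h, a_i, b_i` with `F_i(x̄) = a_i(x̄)` when
`h(x̄) ∈ A_i` and `F_i(x̄) = b_i(x̄)` when `h(x̄) ∉ A_i`. -/
def FunTupleMRed {s : ℕ} (F : Fin s → (Fin s → ℕ) → ℕ) (A : Fin s → Set ℕ) : Prop :=
  ∃ (h : (Fin s → ℕ) → ℕ) (a b : Fin s → (Fin s → ℕ) → ℕ),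
    Computable h ∧ (∀ i : Fin s, Computable (a i)) ∧ (∀ i : Fin s, Computable (b i)) ∧
    ∀ (x : Fin s → ℕ) (i : Fin s),
      (h x ∈ A i → F i x = a i x) ∧ (h x ∉ A i → F i x = b i x)

/-- The graph of a partial function `ℕ →. ℕ` as a subset of `ℕ × ℕ`. -/
def pgraph (f : ℕ →. ℕ) : Set (ℕ × ℕ) := {p : ℕ × ℕ | p.2 ∈ f p.1}

/-- Two partial functions are almost equal if the symmetric difference of their graphs
is finite. -/
def AlmostEqPart (f g : ℕ →. ℕ) : Prop :=
  ((pgraph f \ pgraph g) ∪ (pgraph g \ pgraph f)).Finite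

/-!
A `Σ⁰₂` set `S = {n | ∃ a, ∀ b, R (n, a, b)}` is approximated by a computable search that tests the
candidate witnesses `a = 0, 1, 2, …` in turn and abandons a candidate as soon as some `R (n, a, b)`
fails: the current guess stays bounded when `n ∈ S` and tends to infinity when `n ∉ S`.

Given `Σ⁰₂` sets `Xᵢ`, the recursion theorem (with parameters) yields a computable family of
tuples `x̄(n)` such that `φ_{xᵢ(n)}(m)` is `φ_{bᵢ(x̄(n))}(m)` when, at stage `m`, the guess for
`n ∈ Xᵢ` is at most the guess for `h(x̄(n)) ∈ Aᵢ`, and `φ_{aᵢ(x̄(n))}(m)` otherwise. If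
`n ∈ Xᵢ` but `h(x̄(n)) ∉ Aᵢ`, the second guess eventually exceeds the first for good, so
`φ_{xᵢ(n)}` almost equals `φ_{bᵢ(x̄(n))} = φ_{Fᵢ(x̄(n))}`; the other mismatch yields the same with
`aᵢ`. Both contradict the hypothesis on `F`, so `n ↦ h(x̄(n))` reduces `(Xᵢ)` to `(Aᵢ)`.
-/
open Filter Nat.Partrec Nat.Partrec.Code Encodable

section WitnessSearch

/-- The state `(a, k)` at stage `t`: `a` is the current candidate witness, and `R (n, a, b)` has
been confirmed for all `b < k`. -/
def witnessSearch (R : ℕ × ℕ × ℕ → Bool) (n : ℕ) : ℕ → ℕ × ℕ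
  | 0 => (0, 0)
  | t + 1 =>
    let p := witnessSearch R n t
    bif R (n, p.1, p.2) then (p.1, p.2 + 1) else (p.1 + 1, 0)

def guess (R : ℕ × ℕ × ℕ → Bool) (n t : ℕ) : ℕ := (witnessSearch R n t).1

variable {R : ℕ × ℕ × ℕ → Bool} {n : ℕ}

theorem witnessSearch_succ_of_true {t : ℕ}
    (h : R (n, guess R n t, (witnessSearch R n t).2) = true) :
    witnessSearch R n (t + 1) = (guess R n t, (witnessSearch R n t).2 + 1) := by
  change (bif R (n, guess R n t, (witnessSearch R n t).2) then _ else _) = _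
  rw [h]; rfl

theorem witnessSearch_succ_of_false {t : ℕ}
    (h : R (n, guess R n t, (witnessSearch R n t).2) = false) :
    witnessSearch R n (t + 1) = (guess R n t + 1, 0) := by
  change (bif R (n, guess R n t, (witnessSearch R n t).2) then _ else _) = _
  rw [h]; rfl

theorem monotone_guess : Monotone (guess R n) :=
  monotone_nat_of_le_succ fun t => by
    cases h : R (n, guess R n t, (witnessSearch R n t).2)
    · simp [guess, witnessSearch_succ_of_false h]
    · simp [guess, witnessSearch_succ_of_true h]

theorem guess_le_of_forall {a : ℕ} (ha : ∀ b, R (n, a, b) = true) (t : ℕ) : guess R n t ≤ a := by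
  induction t with
  | zero => exact Nat.zero_le a
  | succ t ih =>
    cases h : R (n, guess R n t, (witnessSearch R n t).2)
    · have hne : guess R n t ≠ a := by rintro rfl; simp [ha] at h
      simpa [guess, witnessSearch_succ_of_false h] using ih.lt_of_ne hne
    · simpa [guess, witnessSearch_succ_of_true h] using ih

theorem witnessSearch_confirmed (t : ℕ) :
    ∀ b < (witnessSearch R n t).2, R (n, guess R n t, b) = true := by
  induction t with
  | zero => simp [witnessSearch]
  | succ t ih =>
    intro b hb
    cases h : R (n, guess R n t, (witnessSearch R n t).2)
    · simp [witnessSearch_succ_of_false h] at hb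
    · rw [witnessSearch_succ_of_true h] at hb
      rw [guess, witnessSearch_succ_of_true h]
      rcases Nat.lt_succ_iff_lt_or_eq.1 hb with hb | rfl
      exacts [ih b hb, h]

theorem guess_lt_guess_of_eq_false (d : ℕ) :
    ∀ t, R (n, guess R n t, (witnessSearch R n t).2 + d) = false →
      guess R n t < guess R n (t + d + 1) := by
  induction d with
  | zero =>
    intro t hR
    simp [guess, witnessSearch_succ_of_false hR]
  | succ d ih =>
    intro t hR
    cases hR₀ : R (n, guess R n t, (witnessSearch R n t).2)
    · calc guess R n t < guess R n (t + 1) := by simp [guess, witnessSearch_succ_of_false hR₀]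
        _ ≤ guess R n (t + (d + 1) + 1) := monotone_guess (by omega)
    · have hstep := witnessSearch_succ_of_true hR₀
      have hguess : guess R n (t + 1) = guess R n t := by simp [guess, hstep]
      have := ih (t + 1) (by rwa [hguess, hstep, add_right_comm])
      rwa [hguess, add_right_comm t 1, add_assoc t] at this

theorem exists_guess_lt (h : ∀ a, ∃ b, R (n, a, b) = false) (t : ℕ) :
    ∃ t', guess R n t < guess R n t' := by
  obtain ⟨b, hb⟩ := h (guess R n t)
  have hk : (witnessSearch R n t).2 ≤ b := not_lt.1 fun hlt => by
    simp [witnessSearch_confirmed t b hlt] at hb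
  exact ⟨_, guess_lt_guess_of_eq_false _ t (by rwa [Nat.add_sub_cancel' hk])⟩

theorem tendsto_guess (h : ∀ a, ∃ b, R (n, a, b) = false) : Tendsto (guess R n) atTop atTop := by
  refine tendsto_atTop_atTop_of_monotone monotone_guess fun B => ?_
  induction B with
  | zero => exact ⟨0, Nat.zero_le _⟩
  | succ B ih =>
    obtain ⟨t, ht⟩ := ih
    obtain ⟨t', ht'⟩ := exists_guess_lt h t
    exact ⟨t', ht.trans_lt ht'⟩

end WitnessSearch

theorem eventually_guess_lt {R R' : ℕ × ℕ × ℕ → Bool} {S S' : Set ℕ} {n k : ℕ}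
    (hS : S = {n | ∃ a, ∀ b, R (n, a, b) = true}) (hS' : S' = {n | ∃ a, ∀ b, R' (n, a, b) = true})
    (hn : n ∈ S) (hk : k ∉ S') : ∀ᶠ t in atTop, guess R n t < guess R' k t := by
  obtain ⟨a, ha⟩ := hS ▸ hn
  have hk' : ∀ a, ∃ b, R' (k, a, b) = false := by simpa [hS'] using hk
  filter_upwards [(tendsto_guess hk').eventually_gt_atTop a] with t ht
  exact (guess_le_of_forall ha t).trans_lt ht

theorem pgraph_injOn_fst (f : ℕ →. ℕ) : Set.InjOn Prod.fst (pgraph f) := by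
  rintro ⟨m, v⟩ hv ⟨_, w⟩ hw rfl
  exact congrArg _ (Part.mem_unique hv hw)

theorem finite_pgraph_inter_fst_lt (f : ℕ →. ℕ) (N : ℕ) : (pgraph f ∩ {p | p.1 < N}).Finite :=
  Set.Finite.of_finite_image ((Set.finite_Iio N).subset (by rintro _ ⟨p, hp, rfl⟩; exact hp.2))
    ((pgraph_injOn_fst f).mono Set.inter_subset_left)

theorem almostEqPart_of_eventuallyEq {f g : ℕ →. ℕ} (h : f =ᶠ[atTop] g) : AlmostEqPart f g := by
  obtain ⟨N, hN⟩ := eventually_atTop.1 h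
  have hlt : ∀ {f g : ℕ →. ℕ}, (∀ m ≥ N, f m = g m) →
      pgraph f \ pgraph g ⊆ pgraph f ∩ {p | p.1 < N} :=
    fun hfg p hp => ⟨hp.1, show p.1 < N from not_le.1 fun hle => hp.2 (by
      simpa [pgraph, hfg _ hle] using hp.1)⟩
  exact ((finite_pgraph_inter_fst_lt f N).union (finite_pgraph_inter_fst_lt g N)).subset
    (Set.union_subset_union (hlt hN) (hlt fun m hm => (hN m hm).symm))

section Computability

variable {α σ : Type*} [Primcodable α] [Primcodable σ]

theorem Computable.fin_curry₁ {s : ℕ} {f : Fin s → α → σ} : Computable₂ f ↔ ∀ i, Computable (f i) :=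
  ⟨fun hf i => hf.comp (Computable.const i) Computable.id, fun hf =>
    (Computable.vector_get.comp ((Computable.vector_ofFn hf).comp Computable.snd)
      Computable.fst).of_eq fun p => by simp⟩

theorem computable_guess {R : α → ℕ × ℕ × ℕ → Bool} (hR : Computable₂ R) :
    Computable fun q : α × ℕ × ℕ => guess (R q.1) q.2.1 q.2.2 := by
  open Computable in
  have hstate : Computable fun x : (α × ℕ × ℕ) × ℕ × ℕ × ℕ => x.2.2 := snd.comp snd
  have hstep : Computable₂ fun (q : α × ℕ × ℕ) (x : ℕ × ℕ × ℕ) =>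
      bif R q.1 (q.2.1, x.2.1, x.2.2) then (x.2.1, x.2.2 + 1) else (x.2.1 + 1, 0) :=
    (Computable.cond (hR.comp (fst.comp fst) ((fst.comp (snd.comp fst)).pair hstate))
      ((fst.comp hstate).pair (Computable.succ.comp (snd.comp hstate)))
      ((Computable.succ.comp (fst.comp hstate)).pair (const 0))).to₂
  refine fst.comp ((nat_rec (snd.comp snd) (const (0, 0)) hstep).of_eq fun q => ?_)
  induction q.2.2 with
  | zero => rfl
  | succ t ih => simp [ih, witnessSearch]

theorem partrec₂_phi : Partrec₂ phi :=
  eval_part.comp ((Computable.ofNat Code).comp Computable.fst) Computable.snd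

theorem exists_computable_tuple_fixedPoint {s : ℕ} {G : α × (Fin s → ℕ) × Fin s → ℕ →. ℕ}
    (hG : Partrec₂ G) : ∃ x : α → Fin s → ℕ, Computable x ∧ ∀ p i, phi (x p i) = G (p, x p, i) := by
  open Computable in
  let X : Code → α → Fin s → ℕ := fun c p i => encode (curry c (encode (p, i)))
  have hX : Computable₂ X := by
    have : Primrec₂ fun (q : Code × α) (i : Fin s) => encode (curry q.1 (encode (q.2, i))) :=
      Primrec.encode.comp (primrec₂_curry.comp (Primrec.fst.comp Primrec.fst)
        (Primrec.encode.comp ((Primrec.snd.comp Primrec.fst).pair Primrec.snd)))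
    exact (Primrec.fin_curry.2 this).to_comp.to₂
  let f : Code → ℕ →. ℕ := fun c N =>
    Part.bind (Part.ofOption (decode N)) fun q : (α × Fin s) × ℕ => G (q.1.1, X c q.1.1, q.1.2) q.2
  have hf : Partrec₂ f :=
    ((Computable.decode.comp snd).ofOption.bind (hG.comp ((fst.comp (fst.comp snd)).pair
      ((hX.comp (fst.comp fst) (fst.comp (fst.comp snd))).pair (snd.comp (fst.comp snd))))
      (snd.comp snd)).to₂).to₂
  obtain ⟨c, hc⟩ := fixed_point₂ hf
  refine ⟨X c, hX.comp (const c) .id, fun p i => funext fun m => ?_⟩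
  calc phi (X c p i) m = eval c (encode ((p, i), m)) := by simp [phi, X, eval_curry]
    _ = G (p, X c p, i) m := by simp [hc, f, encodek]

end Computability

section Race

variable {s : ℕ} (RA RX : Fin s → ℕ × ℕ × ℕ → Bool) (h : (Fin s → ℕ) → ℕ)
  (a b : Fin s → (Fin s → ℕ) → ℕ)

def raceIndex (n : ℕ) (y : Fin s → ℕ) (i : Fin s) (m : ℕ) : ℕ :=
  if guess (RX i) n m ≤ guess (RA i) (h y) m then b i y else a i y

variable {RA RX h a b}

theorem computable_raceIndex (hRA : Computable₂ RA) (hRX : Computable₂ RX) (hh : Computable h)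
    (ha : Computable₂ a) (hb : Computable₂ b) :
    Computable fun q : (ℕ × (Fin s → ℕ) × Fin s) × ℕ =>
      raceIndex RA RX h a b q.1.1 q.1.2.1 q.1.2.2 q.2 := by
  open Computable in
  have hn : Computable fun q : (ℕ × (Fin s → ℕ) × Fin s) × ℕ => q.1.1 := fst.comp fst
  have hy : Computable fun q : (ℕ × (Fin s → ℕ) × Fin s) × ℕ => q.1.2.1 :=
    fst.comp (snd.comp fst)
  have hi : Computable fun q : (ℕ × (Fin s → ℕ) × Fin s) × ℕ => q.1.2.2 :=
    snd.comp (snd.comp fst)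
  have hguessX := (computable_guess hRX).comp (hi.pair (hn.pair snd))
  have hguessA := (computable_guess hRA).comp (hi.pair ((hh.comp hy).pair snd))
  exact (cond ((Primrec.nat_le.decide.to_comp).comp hguessX hguessA) (hb.comp hi hy)
    (ha.comp hi hy)).of_eq fun q => by simp [raceIndex, Bool.cond_decide]

theorem mem_iff_of_phi_eq_raceIndex {A X : Fin s → Set ℕ} {F : Fin s → (Fin s → ℕ) → ℕ}
    (hA : ∀ i, A i = {n | ∃ a, ∀ b, RA i (n, a, b) = true})
    (hX : ∀ i, X i = {n | ∃ a, ∀ b, RX i (n, a, b) = true})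
    (hF : ∀ x i, (h x ∈ A i → F i x = a i x) ∧ (h x ∉ A i → F i x = b i x))
    (hne : ∀ x i, ¬ AlmostEqPart (phi (F i x)) (phi (x i))) {n : ℕ} {x : Fin s → ℕ}
    (hx : ∀ i m, phi (x i) m = phi (raceIndex RA RX h a b n x i m) m) (i : Fin s) :
    n ∈ X i ↔ h x ∈ A i := by
  constructor
  · intro hn
    by_contra hk
    refine hne x i (almostEqPart_of_eventuallyEq ?_)
    filter_upwards [eventually_guess_lt (hX i) (hA i) hn hk] with m hm
    rw [(hF x i).2 hk, hx, raceIndex, if_pos hm.le]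
  · intro hk
    by_contra hn
    refine hne x i (almostEqPart_of_eventuallyEq ?_)
    filter_upwards [eventually_guess_lt (hA i) (hX i) hk hn] with m hm
    rw [(hF x i).1 hk, hx, raceIndex, if_neg hm.not_ge]

end Race

theorem mComplete_sigma02_of_funTuple_general {s : ℕ} (A : Fin s → Set ℕ)
    (hA : ∀ i : Fin s, Sigma02 (A i))
    (F : Fin s → (Fin s → ℕ) → ℕ) (hF : FunTupleMRed F A)
    (hne : ∀ (x : Fin s → ℕ) (i : Fin s), ¬ AlmostEqPart (phi (F i x)) (phi (x i))) :
    (∀ i : Fin s, Sigma02 (A i)) ∧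
    ∀ X : Fin s → Set ℕ, (∀ i : Fin s, Sigma02 (X i)) → TupleMRed X A := by
  refine ⟨hA, fun X hX => ?_⟩
  choose RA hRAc hRA using hA
  choose RX hRXc hRX using hX
  obtain ⟨h, a, b, hh, ha, hb, hab⟩ := hF
  have hrace : Partrec₂ fun (q : ℕ × (Fin s → ℕ) × Fin s) m =>
      phi (raceIndex RA RX h a b q.1 q.2.1 q.2.2 m) m :=
    partrec₂_phi.comp (computable_raceIndex (Computable.fin_curry₁.2 hRAc)
      (Computable.fin_curry₁.2 hRXc) hh (Computable.fin_curry₁.2 ha)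
      (Computable.fin_curry₁.2 hb)) Computable.snd
  obtain ⟨x, hxc, hx⟩ := exists_computable_tuple_fixedPoint hrace
  exact ⟨fun n => h (x n), hh.comp hxc, fun i n =>
    mem_iff_of_phi_eq_raceIndex hRA hRX hab hne (fun j m => congrFun (hx n j) m) i⟩

/-- If an `s`-tuple of `Σ⁰₂` sets admits an m-reducible tuple of functions
`(F₀,…,F_{s−1})` with `φ_{F_i(x̄)}` not almost equal to `φ_{x_i}`, then it is
m-complete in the class of `s`-tuples of `Σ⁰₂` sets. -/
theorem mComplete_sigma02_of_funTuple {s : ℕ} (hs : 1 ≤ s) (A : Fin s → Set ℕ)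
    (hA : ∀ i : Fin s, Sigma02 (A i))
    (F : Fin s → (Fin s → ℕ) → ℕ) (hF : FunTupleMRed F A)
    (hne : ∀ (x : Fin s → ℕ) (i : Fin s), ¬ AlmostEqPart (phi (F i x)) (phi (x i))) :
    (∀ i : Fin s, Sigma02 (A i)) ∧
    ∀ X : Fin s → Set ℕ, (∀ i : Fin s, Sigma02 (X i)) → TupleMRed X A :=
  mComplete_sigma02_of_funTuple_general A hA F hF hne
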